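/- Let G and H be finitely presented groups with fixed finite symmetric generating sets S and T, let A be a finite set, let X_H ⊆ A^H be a subshift of finite type, let n ∈ ℕ, and let 𝒜 = B_H(n,1_H)^S × B_G(n²+n,1_G)^{B_H(n,1_H)} × A^{B_H(n,1_H)}. Then the set {(df, ℓ_{Ff}, f*(B_nσ)) : (f,F) ∈ QIP_n(G,H), σ ∈ X_H} ⊆ 𝒜^G is a subshift of finite type. -/

import Mathlib

/-- The Cayley graph of a group with respect to a (symmetric) set `S`:
`g` and `g'` are adjacent when they differ by right multiplication by an element of `S`. -/
def cayley {G : Type*} [Group G] (S : Set G) : SimpleGraph G :=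
  SimpleGraph.fromRel (fun g g' => g⁻¹ * g' ∈ S)

/-- The closed ball of radius `n` about `g` in the word metric induced by `S`. -/
def ball {G : Type*} [Group G] (S : Set G) (n : ℕ) (g : G) : Set G :=
  {x : G | (cayley S).dist g x ≤ n}

/-- `f : G → H` is `n`-Lipschitz for the word metrics associated to `S` and `T`. -/
def IsLip {G H : Type*} [Group G] [Group H] (S : Set G) (T : Set H)
    (n : ℕ) (f : G → H) : Prop :=
  ∀ x y : G, (cayley T).dist (f x) (f y) ≤ n * (cayley S).dist x y

/-- The product in `G` of (the letters of) a word over `S`. -/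
def wordProd {G : Type*} [Group G] (S : Finset G) (w : List ↥S) : G :=
  (w.map (fun s => (s : G))).prod

/-- The integral `∫_{g·w} σ` of a configuration `σ : G → (S → H)` along the word `w` based at
`g` : the telescoping product `σ(g)(s₀)·σ(gs₀)(s₁)⋯σ(gs₀⋯s_{k-1})(s_k)`. -/
def sint {G H : Type*} [Group G] [Group H] {S : Finset G}
    (σ : G → ↥S → H) : G → List ↥S → H
  | _, [] => 1
  | g, s :: w => σ g s * sint σ (g * (s : G)) w

/-- An `n`-QI pair: `f` and `F` are `n`-Lipschitz and mutual `n`-quasi-inverses. -/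
def IsQIPair {G H : Type*} [Group G] [Group H] (S : Set G) (T : Set H)
    (n : ℕ) (f : G → H) (F : H → G) : Prop :=
  IsLip S T n f ∧ IsLip T S n F ∧
    (∀ g : G, (cayley S).dist (F (f g)) g ≤ n) ∧
    (∀ h : H, (cayley T).dist (f (F h)) h ≤ n)

/-- `f : G → H` is a quasi-isometry for the word metrics: for some `n > 0` it is an
`n`-quasi-isometric embedding and `n`-quasi-surjective. -/
def IsQI {G H : Type*} [Group G] [Group H] (S : Set G) (T : Set H) (f : G → H) : Prop :=
  ∃ n : ℕ, 0 < n ∧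
    (∀ x y : G,
      ((cayley S).dist x y : ℝ) / n - n ≤ ((cayley T).dist (f x) (f y) : ℝ) ∧
      ((cayley T).dist (f x) (f y) : ℝ) ≤ n * ((cayley S).dist x y : ℝ) + n) ∧
    (∀ h : H, ∃ g : G, (cayley T).dist (f g) h ≤ n)

/-- An elementary homotopy move between words over `S`: replace a subword `v` of length at
most `K` by a word `v'` of length at most `K` representing the same element of `G`. -/
def ElemMove {G : Type*} [Group G] (S : Finset G) (K : ℕ) (w₁ w₂ : List ↥S) : Prop :=
  ∃ u v v' x : List ↥S, w₁ = u ++ v ++ x ∧ w₂ = u ++ v' ++ x ∧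
    v.length ≤ K ∧ v'.length ≤ K ∧ wordProd S v = wordProd S v'

/-- `G` is presented over the (symmetric) generating set `S` by relators of length at most
`K`: any two words over `S` representing the same element of `G` are connected by a finite
sequence of elementary moves of size at most `K`. -/
def PresentedBy {G : Type*} [Group G] (S : Finset G) (K : ℕ) : Prop :=
  ∀ w w' : List ↥S, wordProd S w = wordProd S w' →
    Relation.ReflTransGen (ElemMove S K) w w'

/-- `X ⊆ A^G` is a subshift of finite type: there is a finite family of forbidden patterns
`p i : F i → A` (`F i ⊆ G` finite) such that `X` consists exactly of those `σ` for which no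
translate `σ·g = (x ↦ σ (g * x))` restricts on `F i` to `p i`. -/
def IsSFT {G A : Type*} [Group G] (X : Set (G → A)) : Prop :=
  ∃ (ι : Type) (_ : Finite ι) (F : ι → Finset G) (p : (i : ι) → (↥(F i) → A)),
    X = {σ : G → A | ∀ (g : G) (i : ι), ∃ x : ↥(F i), σ (g * ↑x) ≠ p i x}

/-!
The set is cut out by a condition on windows of a large radius `R`: a configuration belongs to it
as soon as each of its `R`-windows agrees with a translate of a member. Local witnesses
`(f_g, F_g, σ_g)`, normalised by `f_g 1 = 1`, are then glued in two steps.

The first components integrate to a global `f`: along a word the local identities make the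
integral telescope, relators of `G` of length `≤ R` do not change it, so by finite presentability
it depends only on the endpoint.

For `F`, each `g` gives a chart `h ↦ g * F_g (f(g)⁻¹ * h)`, and the charts of points at distance
`≤ R` agree where both are defined. Call `c` centred over `h` if `f c` is `n`-close to `h` and the
chart of `c` sends `h` to `c`. Nearby centred points over the same `h` coincide, so lifting words
of `T` through centred points is deterministic and invariant under short relators of `H`, hence
depends only on the product of the word. Every centred point is reached by such a lift from a fixed
base point, so each `h` carries exactly one centred point, which is `F h`.
-/

namespace QISubshift

section WordMetric

variable {G H : Type*} [Group G] [Group H]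

lemma cayley_adj {S : Set G} {x y : G} :
    (cayley S).Adj x y ↔ x ≠ y ∧ (x⁻¹ * y ∈ S ∨ y⁻¹ * x ∈ S) := by
  simp [cayley, SimpleGraph.fromRel_adj]

def mulLeftHom (S : Set G) (a : G) : cayley S →g cayley S where
  toFun x := a * x
  map_rel' {x y} h := by
    rw [cayley_adj] at h ⊢
    simpa [mul_assoc] using h

lemma dist_mul_left_le (S : Set G) (a x y : G) :
    (cayley S).dist (a * x) (a * y) ≤ (cayley S).dist x y := by
  by_cases hr : (cayley S).Reachable x y
  · obtain ⟨p, hp⟩ := hr.exists_walk_length_eq_dist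
    calc (cayley S).dist (a * x) (a * y) ≤ (p.map (mulLeftHom S a)).length :=
          SimpleGraph.dist_le _
      _ = (cayley S).dist x y := by rw [SimpleGraph.Walk.length_map, hp]
  · have hr' : ¬ (cayley S).Reachable (a * x) (a * y) := fun h => hr <| by
      simpa [mulLeftHom] using h.map (mulLeftHom S a⁻¹)
    simp [SimpleGraph.dist_eq_zero_of_not_reachable hr']

@[simp]
lemma dist_mul_left (S : Set G) (a x y : G) :
    (cayley S).dist (a * x) (a * y) = (cayley S).dist x y :=
  (dist_mul_left_le S a x y).antisymm <| by
    simpa using dist_mul_left_le S a⁻¹ (a * x) (a * y)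

lemma dist_one_inv_mul (S : Set G) (x y : G) :
    (cayley S).dist 1 (x⁻¹ * y) = (cayley S).dist x y := by
  simpa using dist_mul_left S x⁻¹ x y

lemma dist_self_mul (S : Set G) (x y : G) :
    (cayley S).dist x (x * y) = (cayley S).dist 1 y := by
  simpa using dist_mul_left S x 1 y

lemma mem_ball_one {S : Set G} {m : ℕ} {x : G} : x ∈ ball S m 1 ↔ (cayley S).dist 1 x ≤ m :=
  Iff.rfl

lemma reachable_mul_of_mem {S : Set G} (x : G) {s : G} (hs : s ∈ S) :
    (cayley S).Reachable x (x * s) := by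
  by_cases h : x = x * s
  · exact h ▸ SimpleGraph.Reachable.refl x
  · exact (cayley_adj.mpr ⟨h, .inl (by simpa using hs)⟩).reachable

lemma dist_mul_of_mem_le {S : Set G} (x : G) {s : G} (hs : s ∈ S) :
    (cayley S).dist x (x * s) ≤ 1 := by
  by_cases h : x = x * s
  · simp [← h]
  · exact (SimpleGraph.dist_le (cayley_adj.mpr ⟨h, .inl (by simpa using hs)⟩).toWalk).trans_eq rfl

lemma cayley_connected {S : Set G} (hS : Subgroup.closure S = ⊤) : (cayley S).Connected := by
  have h1 : ∀ g, (cayley S).Reachable 1 g := fun g => by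
    induction (hS ▸ Subgroup.mem_top g : g ∈ Subgroup.closure S)
      using Subgroup.closure_induction_right with
    | one => rfl
    | mul_right x _ s hs ih => exact ih.trans (reachable_mul_of_mem x hs)
    | mul_inv_cancel x _ s hs ih =>
      exact ih.trans (by simpa using (reachable_mul_of_mem (x * s⁻¹) hs).symm)
  exact ⟨fun x y => (h1 x).symm.trans (h1 y)⟩

lemma isLip_of_forall_mul_mem {S : Set G} {T : Set H} (hS : Subgroup.closure S = ⊤)
    (hT : Subgroup.closure T = ⊤) {n : ℕ} {φ : G → H}
    (hφ : ∀ x, ∀ s ∈ S, (cayley T).dist (φ x) (φ (x * s)) ≤ n) : IsLip S T n φ := by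
  have hadj : ∀ {x y}, (cayley S).Adj x y → (cayley T).dist (φ x) (φ y) ≤ n := by
    intro x y h
    rcases (cayley_adj.mp h).2 with hs | hs
    · simpa using hφ x _ hs
    · simpa [SimpleGraph.dist_comm] using hφ y _ hs
  have hwalk : ∀ {x y} (p : (cayley S).Walk x y),
      (cayley T).dist (φ x) (φ y) ≤ n * p.length := by
    intro x y p
    induction p with
    | nil => simp
    | @cons x z y h p ih =>
      rw [SimpleGraph.Walk.length_cons, Nat.mul_succ]
      exact ((cayley_connected hT).dist_triangle (v := φ z)).trans (by have := hadj h; omega)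
  intro x y
  obtain ⟨p, hp⟩ := (cayley_connected hS).exists_walk_length_eq_dist x y
  exact hp ▸ hwalk p

end WordMetric

section Words

variable {G H : Type*} [Group G] [Group H] {S : Finset G}

@[simp]
lemma wordProd_nil : wordProd S [] = 1 := rfl

@[simp]
lemma wordProd_cons (s : S) (w : List S) : wordProd S (s :: w) = s * wordProd S w := by
  simp [wordProd]

@[simp]
lemma wordProd_append (w₁ w₂ : List S) :
    wordProd S (w₁ ++ w₂) = wordProd S w₁ * wordProd S w₂ := by
  simp [wordProd]

lemma dist_mul_wordProd_le (x : G) (w : List S) :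
    (cayley (S : Set G)).dist x (x * wordProd S w) ≤ w.length := by
  induction w generalizing x with
  | nil => simp
  | cons s w ih =>
    have hs : (s : G) ∈ (S : Set G) := s.2
    have := (reachable_mul_of_mem x hs).dist_triangle_left (x * wordProd S (s :: w))
    have := dist_mul_of_mem_le x hs
    have := ih (x * s)
    simp only [wordProd_cons, List.length_cons, ← mul_assoc] at *
    omega

lemma dist_one_wordProd_le (w : List S) :
    (cayley (S : Set G)).dist 1 (wordProd S w) ≤ w.length := by
  simpa using dist_mul_wordProd_le 1 w

lemma exists_wordProd_eq_of_walk (hSsym : ∀ s ∈ S, s⁻¹ ∈ S) {x y : G}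
    (p : (cayley (S : Set G)).Walk x y) :
    ∃ w : List S, wordProd S w = x⁻¹ * y ∧ w.length ≤ p.length := by
  induction p with
  | nil => exact ⟨[], by simp⟩
  | @cons x z y h q ih =>
    obtain ⟨w, hw, hlen⟩ := ih
    have hmem : x⁻¹ * z ∈ S := by
      rcases (cayley_adj.mp h).2 with h | h
      · exact h
      · simpa using hSsym _ h
    exact ⟨⟨_, hmem⟩ :: w, by simp [hw, mul_assoc], by simpa using hlen⟩

lemma exists_wordProd_eq (hSsym : ∀ s ∈ S, s⁻¹ ∈ S) (hSgen : Subgroup.closure (S : Set G) = ⊤)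
    (g : G) : ∃ w : List S, wordProd S w = g ∧ w.length ≤ (cayley (S : Set G)).dist 1 g := by
  obtain ⟨p, hp⟩ := (cayley_connected hSgen).exists_walk_length_eq_dist 1 g
  obtain ⟨w, hw, hlen⟩ := exists_wordProd_eq_of_walk hSsym p
  exact ⟨w, by simpa using hw, hp ▸ hlen⟩

noncomputable def geodesic (S : Finset G) (g : G) : List S :=
  Classical.epsilon fun w => wordProd S w = g ∧ w.length ≤ (cayley (S : Set G)).dist 1 g

lemma geodesic_spec (hSsym : ∀ s ∈ S, s⁻¹ ∈ S) (hSgen : Subgroup.closure (S : Set G) = ⊤)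
    (g : G) : wordProd S (geodesic S g) = g ∧
      (geodesic S g).length ≤ (cayley (S : Set G)).dist 1 g :=
  Classical.epsilon_spec (exists_wordProd_eq hSsym hSgen g)

lemma ball_finite (hSsym : ∀ s ∈ S, s⁻¹ ∈ S) (hSgen : Subgroup.closure (S : Set G) = ⊤)
    (m : ℕ) : (ball (S : Set G) m 1).Finite := by
  refine ((List.finite_length_le (α := S) m).image (wordProd S)).subset fun g hg => ?_
  obtain ⟨w, hw, hlen⟩ := exists_wordProd_eq hSsym hSgen g
  exact ⟨w, hlen.trans hg, hw⟩

lemma _root_.PresentedBy.mono {K K' : ℕ} (h : PresentedBy S K) (hK : K ≤ K') : PresentedBy S K' :=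
  fun w w' hw => Relation.ReflTransGen.mono (fun _ _ ⟨u, v, v', x, h₁, h₂, hv, hv', hp⟩ =>
    ⟨u, v, v', x, h₁, h₂, hv.trans hK, hv'.trans hK, hp⟩) _ _ (h w w' hw)

end Words

section Integration

variable {G H : Type*} [Group G] [Group H] {S : Finset G}

lemma sint_append (δ : G → S → H) (g : G) (w₁ w₂ : List S) :
    sint δ g (w₁ ++ w₂) = sint δ g w₁ * sint δ (g * wordProd S w₁) w₂ := by
  induction w₁ generalizing g with
  | nil => simp [sint]
  | cons s w ih => simp [sint, ih, mul_assoc]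

lemma sint_eq_of_forall_prefix (δ : G → S → H) (φ : G → H) (g : G) (w : List S)
    (hδ : ∀ u s, u ++ [s] <+: w →
      δ (g * wordProd S u) s = (φ (wordProd S u))⁻¹ * φ (wordProd S u * s)) :
    sint δ g w = (φ 1)⁻¹ * φ (wordProd S w) := by
  induction w generalizing g φ with
  | nil => simp [sint]
  | cons s w ih =>
    have h₀ : δ g s = (φ 1)⁻¹ * φ s := by simpa using hδ [] s (by simp)
    have h₁ := ih (fun y => φ (s * y)) (g * s) fun u t hu => by
      simpa [mul_assoc] using hδ (s :: u) t (List.cons_prefix_cons.mpr ⟨rfl, hu⟩)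
    simp only [sint, h₀, h₁, wordProd_cons]
    group

theorem exists_primitive (hSsym : ∀ s ∈ S, s⁻¹ ∈ S) (hSgen : Subgroup.closure (S : Set G) = ⊤)
    {R : ℕ} (hS : PresentedBy S R) (δ : G → S → H) (φ : G → G → H) (hφ : ∀ g, φ g 1 = 1)
    (hδ : ∀ g x, (cayley (S : Set G)).dist 1 x ≤ R →
      ∀ s : S, δ (g * x) s = (φ g x)⁻¹ * φ g (x * s)) :
    ∃ f : G → H, ∀ g x, (cayley (S : Set G)).dist 1 x ≤ R → f (g * x) = f g * φ g x := by
  have hshort : ∀ g (v : List S), v.length ≤ R → sint δ g v = φ g (wordProd S v) := by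
    intro g v hv
    rw [sint_eq_of_forall_prefix δ (φ g) g v, hφ, inv_one, one_mul]
    intro u s hu
    have hlen : u.length + 1 ≤ v.length := by simpa using hu.length_le
    exact hδ g _ ((dist_one_wordProd_le u).trans (by omega)) s
  have hcongr : ∀ g (w w' : List S), wordProd S w = wordProd S w' →
      sint δ g w = sint δ g w' := by
    intro g w w' hw
    obtain hmoves := hS w w' hw
    clear hw
    induction hmoves with
    | refl => rfl
    | tail _ hmove ih =>
      obtain ⟨u, v, v', x, rfl, rfl, hv, hv', hp⟩ := hmove
      rw [ih]
      simp only [sint_append, wordProd_append, hshort _ v hv, hshort _ v' hv', hp]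
  refine ⟨fun g => sint δ 1 (geodesic S g), fun g x hx => ?_⟩
  show sint δ 1 (geodesic S (g * x)) = sint δ 1 (geodesic S g) * φ g x
  obtain ⟨hg, -⟩ := geodesic_spec hSsym hSgen g
  obtain ⟨hx', hxlen⟩ := geodesic_spec hSsym hSgen x
  rw [hcongr 1 (geodesic S (g * x)) (geodesic S g ++ geodesic S x) (by simp [hg, hx',
      (geodesic_spec hSsym hSgen _).1]), sint_append, hg, one_mul,
    hshort g _ (hxlen.trans hx), hx']

end Integration

section Configurations

variable {G H A : Type*} [Group G] [Group H] {S : Finset G} {T : Finset H} {n : ℕ}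

abbrev QIAlphabet (S : Finset G) (T : Finset H) (n : ℕ) (A : Type*) :=
  (S → ball (T : Set H) n 1) × (ball (T : Set H) n 1 → ball (S : Set G) (n ^ 2 + n) 1) ×
    (ball (T : Set H) n 1 → A)

/-- The symbol of `τ` at `x` is `(df x, ℓ_{Ff} x, f*(B_n σ) x)`. -/
def Realizes (τ : G → QIAlphabet S T n A) (f : G → H) (F : H → G) (σ : H → A) (x : G) : Prop :=
  (∀ s : S, ((τ x).1 s : H) = (f x)⁻¹ * f (x * s)) ∧
  (∀ k : ball (T : Set H) n 1, ((τ x).2.1 k : G) = x⁻¹ * F (f x * k)) ∧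
  ∀ k : ball (T : Set H) n 1, (τ x).2.2 k = σ (f x * k)

def IsQIConfig (S : Finset G) (T : Finset H) (n : ℕ) (X : Set (H → A))
    (τ : G → QIAlphabet S T n A) : Prop :=
  ∃ f F σ, IsQIPair (S : Set G) (T : Set H) n f F ∧ σ ∈ X ∧ ∀ x, Realizes τ f F σ x

lemma _root_.IsQIPair.translate {f : G → H} {F : H → G} (h : IsQIPair (S : Set G) (T : Set H) n f F)
    (g : G) (a : H) :
    IsQIPair (S : Set G) (T : Set H) n (fun x => a * f (g * x)) (fun y => g⁻¹ * F (a⁻¹ * y)) := by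
  obtain ⟨hf, hF, hFf, hfF⟩ := h
  refine ⟨fun x y => ?_, fun x y => ?_, fun x => ?_, fun y => ?_⟩
  · simpa using hf (g * x) (g * y)
  · simpa using hF (a⁻¹ * x) (a⁻¹ * y)
  · rw [← dist_mul_left _ g]
    simpa using hFf (g * x)
  · rw [← dist_mul_left _ a⁻¹]
    simpa using hfF (a⁻¹ * y)

lemma Realizes.translate {τ : G → QIAlphabet S T n A} {f : G → H} {F : H → G} {σ : H → A}
    {g x : G} (h : Realizes τ f F σ (g * x)) (a : H) :
    Realizes (fun y => τ (g * y)) (fun y => a * f (g * y)) (fun y => g⁻¹ * F (a⁻¹ * y))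
      (fun y => σ (a⁻¹ * y)) x := by
  obtain ⟨h₁, h₂, h₃⟩ := h
  exact ⟨fun s => by simp [h₁ s, mul_assoc], fun k => by simp [h₂ k, mul_assoc],
    fun k => by simp [h₃ k, mul_assoc]⟩

lemma IsQIConfig.exists_normalized {X : Set (H → A)} {τ : G → QIAlphabet S T n A}
    (hX : ∀ σ ∈ X, ∀ a, (fun y => σ (a * y)) ∈ X) (hτ : IsQIConfig S T n X τ) (g : G) :
    ∃ f F σ, IsQIPair (S : Set G) (T : Set H) n f F ∧ f 1 = 1 ∧ σ ∈ X ∧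
      ∀ x, Realizes (fun y => τ (g * y)) f F σ x := by
  obtain ⟨f, F, σ, hfF, hσ, hτ⟩ := hτ
  exact ⟨_, _, _, hfF.translate g (f g)⁻¹, by simp, hX σ hσ _,
    fun x => (hτ (g * x)).translate _⟩

end Configurations

section Subshifts

variable {G A : Type*} [Group G]

lemma isSFT_setOf_forall_window [Finite A] (W : Finset G) (Φ : (W → A) → Prop) :
    IsSFT {τ : G → A | ∀ g, Φ fun x => τ (g * x)} := by
  obtain ⟨m, ⟨e⟩⟩ := Finite.exists_equiv_fin {q : W → A // ¬ Φ q}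
  refine ⟨Fin m, inferInstance, fun _ => W, fun i => (e.symm i).1, Set.ext fun τ => ?_⟩
  refine ⟨fun h g i => ?_, fun h g => ?_⟩
  · by_contra! hc
    exact (e.symm i).2 (funext hc ▸ h g)
  · by_contra hΦ
    obtain ⟨x, hx⟩ := h g (e ⟨_, hΦ⟩)
    simp at hx

lemma _root_.IsSFT.mul_left_mem {X : Set (G → A)} (hX : IsSFT X) {σ : G → A} (hσ : σ ∈ X) (a : G) :
    (fun y => σ (a * y)) ∈ X := by
  obtain ⟨ι, _, F, p, rfl⟩ := hX
  intro g i
  simpa [mul_assoc] using hσ (a * g) i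

lemma _root_.IsSFT.exists_finset_mem_of_forall {X : Set (G → A)} (hX : IsSFT X) :
    ∃ W : Finset G, ∀ σ : G → A, (∀ g, ∃ σ' ∈ X, ∀ x ∈ W, σ (g * x) = σ' x) → σ ∈ X := by
  classical
  obtain ⟨ι, _, F, p, rfl⟩ := hX
  have := Fintype.ofFinite ι
  refine ⟨Finset.univ.biUnion F, fun σ hσ g i => ?_⟩
  obtain ⟨σ', hσ', hagree⟩ := hσ g
  obtain ⟨x, hx⟩ := hσ' 1 i
  refine ⟨x, ?_⟩
  rw [hagree x (Finset.mem_biUnion.mpr ⟨i, Finset.mem_univ i, x.2⟩)]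
  simpa using hx

end Subshifts

section LocalToGlobal

variable {G H A : Type*} [Group G] [Group H]

/-- Local witnesses `(fl g, Fl g, σl g)` realizing `τ` on the `R`-ball about each `g`, and a global
`f` that agrees with `f g * fl g` there. -/
structure Gluing (S : Finset G) (T : Finset H) (n R : ℕ) (X : Set (H → A))
    (τ : G → QIAlphabet S T n A) where
  closure_S : Subgroup.closure (S : Set G) = ⊤
  symm_T : ∀ t ∈ T, t⁻¹ ∈ T
  closure_T : Subgroup.closure (T : Set H) = ⊤
  K : ℕ
  presentedBy_T : PresentedBy T K
  /-- `2 * n * K` bounds the gap between the lifts of the two sides of a relator of `H`. -/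
  le_R : 2 * n * K + (n + 1) ^ 2 ≤ R
  f : G → H
  fl : G → G → H
  Fl : G → H → G
  σl : G → H → A
  isQIPair : ∀ g, IsQIPair (S : Set G) (T : Set H) n (fl g) (Fl g)
  fl_one : ∀ g, fl g 1 = 1
  σl_mem : ∀ g, σl g ∈ X
  realizes : ∀ g x, (cayley (S : Set G)).dist 1 x ≤ R →
    Realizes (fun y => τ (g * y)) (fl g) (Fl g) (σl g) x
  f_mul : ∀ g x, (cayley (S : Set G)).dist 1 x ≤ R → f (g * x) = f g * fl g x

namespace Gluing

variable {S : Finset G} {T : Finset H} {n R : ℕ} {X : Set (H → A)}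
  {τ : G → QIAlphabet S T n A}

lemma dist_triangle_G (C : Gluing S T n R X τ) (x y z : G) :
    (cayley (S : Set G)).dist x z ≤
      (cayley (S : Set G)).dist x y + (cayley (S : Set G)).dist y z :=
  (cayley_connected C.closure_S).dist_triangle

lemma dist_triangle_H (C : Gluing S T n R X τ) (x y z : H) :
    (cayley (T : Set H)).dist x z ≤
      (cayley (T : Set H)).dist x y + (cayley (T : Set H)).dist y z :=
  (cayley_connected C.closure_T).dist_triangle

lemma add_mul_le_R (C : Gluing S T n R X τ) {r : ℕ} (hr : r ≤ n + 1) : n + n * r ≤ R := by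
  have := C.le_R
  nlinarith [Nat.mul_le_mul_left n hr]

lemma mul_add_le_R (C : Gluing S T n R X τ) {d e : ℕ} (hd : d ≤ n) (he : e ≤ 2 * n + 1) :
    n * d + e ≤ R := by
  have := C.le_R
  nlinarith [Nat.mul_le_mul_left n hd]

lemma dist_one_le_R (C : Gluing S T n R X τ) {s : G} (hs : s ∈ S) :
    (cayley (S : Set G)).dist 1 s ≤ R :=
  (by simpa using dist_mul_of_mem_le 1 hs : _ ≤ 1).trans (by have := C.le_R; nlinarith)

variable (C : Gluing S T n R X τ)

lemma isLip_f : IsLip (S : Set G) (T : Set H) n C.f := by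
  refine isLip_of_forall_mul_mem C.closure_S C.closure_T fun x s hs => ?_
  have hs1 : (cayley (S : Set G)).dist 1 s ≤ 1 := by simpa using dist_mul_of_mem_le 1 hs
  rw [C.f_mul x s (C.dist_one_le_R hs), dist_self_mul, ← C.fl_one x]
  exact ((C.isQIPair x).1 1 s).trans (by simpa using Nat.mul_le_mul_left n hs1)

/-- The candidate value of `(F, σ)` at `h`, read off the local witness at `g`. -/
def chart (g : G) (h : H) : G × A :=
  (g * C.Fl g ((C.f g)⁻¹ * h), C.σl g ((C.f g)⁻¹ * h))

lemma chart_f_mul (g : G) (k : ball (T : Set H) n 1) :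
    C.chart g (C.f g * k) = (g * (τ g).2.1 k, (τ g).2.2 k) := by
  obtain ⟨-, h₂, h₃⟩ := C.realizes g 1 (by simp)
  simp only [mul_one, C.fl_one, one_mul, inv_one] at h₂ h₃
  simp [chart, h₂, h₃]

lemma chart_eq_chart {g g' : G} {h : H} (hd : (cayley (S : Set G)).dist g g' ≤ R)
    (hh : (cayley (T : Set H)).dist (C.f g') h ≤ n) : C.chart g' h = C.chart g h := by
  obtain ⟨x, rfl⟩ : ∃ x, g' = g * x := ⟨g⁻¹ * g', by group⟩
  obtain ⟨k, rfl⟩ : ∃ k : ball (T : Set H) n 1, h = C.f (g * x) * k :=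
    ⟨⟨_, mem_ball_one.mpr (by rwa [dist_one_inv_mul])⟩, by simp⟩
  rw [dist_self_mul] at hd
  obtain ⟨-, h₂, h₃⟩ := C.realizes g x hd
  simp only at h₂ h₃
  rw [C.chart_f_mul]
  simp [chart, h₂, h₃, C.f_mul g x hd, mul_assoc]

lemma dist_chart_fst_chart_fst_le (g : G) (h h' : H) :
    (cayley (S : Set G)).dist (C.chart g h).1 (C.chart g h').1 ≤
      n * (cayley (T : Set H)).dist h h' := by
  simpa [chart] using (C.isQIPair g).2.1 ((C.f g)⁻¹ * h) ((C.f g)⁻¹ * h')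

lemma dist_chart_fst_le (g : G) (h : H) :
    (cayley (S : Set G)).dist g (C.chart g h).1 ≤ n + n * (cayley (T : Set H)).dist (C.f g) h := by
  have hbase : (cayley (S : Set G)).dist g (C.chart g (C.f g)).1 ≤ n := by
    have := (C.isQIPair g).2.2.1 1
    simpa [chart, dist_self_mul, C.fl_one, SimpleGraph.dist_comm] using this
  exact (C.dist_triangle_G _ _ _).trans
    (add_le_add hbase (C.dist_chart_fst_chart_fst_le g (C.f g) h))

lemma dist_f_chart_fst_le {g : G} {h : H}
    (hR : n + n * (cayley (T : Set H)).dist (C.f g) h ≤ R) :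
    (cayley (T : Set H)).dist (C.f (C.chart g h).1) h ≤ n := by
  have hu := (C.dist_chart_fst_le g h).trans hR
  simp only [chart, dist_self_mul] at hu ⊢
  rw [C.f_mul g _ hu, ← dist_mul_left _ (C.f g)⁻¹, inv_mul_cancel_left]
  exact (C.isQIPair g).2.2.2 _

/-- `c` is the value of the glued `F` at `h` as seen from `c` itself. -/
def Centered (c : G) (h : H) : Prop :=
  (cayley (T : Set H)).dist (C.f c) h ≤ n ∧ (C.chart c h).1 = c

lemma centered_chart_fst {g : G} {h : H}
    (hR : n + n * (cayley (T : Set H)).dist (C.f g) h ≤ R) : C.Centered (C.chart g h).1 h :=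
  ⟨C.dist_f_chart_fst_le hR, by
    rw [C.chart_eq_chart ((C.dist_chart_fst_le g h).trans hR) (C.dist_f_chart_fst_le hR)]⟩

variable {C}

lemma Centered.eq_of_dist_le {c c' : G} {h : H} (hc : C.Centered c h) (hc' : C.Centered c' h)
    (hd : (cayley (S : Set G)).dist c c' ≤ R) : c = c' :=
  calc c = (C.chart c h).1 := hc.2.symm
    _ = (C.chart c' h).1 := by rw [C.chart_eq_chart hd hc'.1]
    _ = c' := hc'.2

lemma Centered.dist_chart_fst_le {c : G} {h : H} (hc : C.Centered c h) (h' : H) :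
    (cayley (S : Set G)).dist c (C.chart c h').1 ≤ n * (cayley (T : Set H)).dist h h' := by
  have := C.dist_chart_fst_chart_fst_le c h h'
  rwa [hc.2] at this

lemma Centered.chart_fst_mul {c : G} {h t : H} (hc : C.Centered c h) (ht : t ∈ T) :
    C.Centered (C.chart c (h * t)).1 (h * t) :=
  C.centered_chart_fst <| C.add_mul_le_R <|
    (C.dist_triangle_H _ h _).trans (add_le_add hc.1 (dist_mul_of_mem_le h ht))

lemma Centered.dist_chart_fst_mul_le {c : G} {h t : H} (hc : C.Centered c h) (ht : t ∈ T) :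
    (cayley (S : Set G)).dist c (C.chart c (h * t)).1 ≤ n :=
  (hc.dist_chart_fst_le (h * t)).trans
    (by simpa using Nat.mul_le_mul_left n (dist_mul_of_mem_le h ht))

variable (C)

def lift : G → H → List T → G
  | c, _, [] => c
  | c, h, t :: w => lift (C.chart c (h * t)).1 (h * t) w

lemma lift_append (c : G) (h : H) (u v : List T) :
    C.lift c h (u ++ v) = C.lift (C.lift c h u) (h * wordProd T u) v := by
  induction u generalizing c h with
  | nil => simp [lift]
  | cons t u ih => simp [lift, ih, mul_assoc]

variable {C}

lemma Centered.lift {c : G} {h : H} (hc : C.Centered c h) (w : List T) :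
    C.Centered (C.lift c h w) (h * wordProd T w) := by
  induction w generalizing c h with
  | nil => simpa [Gluing.lift] using hc
  | cons t w ih => simpa [Gluing.lift, mul_assoc] using ih (hc.chart_fst_mul t.2)

lemma Centered.dist_lift_le {c : G} {h : H} (hc : C.Centered c h) (w : List T) :
    (cayley (S : Set G)).dist c (C.lift c h w) ≤ n * w.length := by
  induction w generalizing c h with
  | nil => simp [Gluing.lift]
  | cons t w ih =>
    have := ih (hc.chart_fst_mul t.2)
    have := hc.dist_chart_fst_mul_le t.2
    have := C.dist_triangle_G c (C.chart c (h * t)).1 (C.lift (C.chart c (h * t)).1 (h * t) w)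
    simp only [Gluing.lift, List.length_cons, Nat.mul_succ]
    omega

lemma Centered.lift_eq_of_elemMove {c : G} {h : H} (hc : C.Centered c h) {w w' : List T}
    (hw : ElemMove T C.K w w') : C.lift c h w = C.lift c h w' := by
  obtain ⟨u, v, v', x, rfl, rfl, hv, hv', hp⟩ := hw
  have hm := hc.lift u
  have h₁ := hm.lift v
  have h₂ := hm.lift v'
  rw [hp] at h₁
  have hmid : C.lift (C.lift c h u) (h * wordProd T u) v =
      C.lift (C.lift c h u) (h * wordProd T u) v' := by
    refine h₁.eq_of_dist_le h₂ ((C.dist_triangle_G _ (C.lift c h u) _).trans ?_)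
    rw [SimpleGraph.dist_comm]
    have := C.le_R
    have := Nat.mul_le_mul_left n hv
    have := Nat.mul_le_mul_left n hv'
    nlinarith [hm.dist_lift_le v, hm.dist_lift_le v']
  simp only [lift_append, wordProd_append, hp, hmid]

lemma Centered.lift_congr {c : G} {h : H} (hc : C.Centered c h) {w w' : List T}
    (hw : wordProd T w = wordProd T w') : C.lift c h w = C.lift c h w' := by
  obtain hmoves := C.presentedBy_T w w' hw
  clear hw
  induction hmoves with
  | refl => rfl
  | tail _ hmove ih => exact ih.trans (hc.lift_eq_of_elemMove hmove)

variable (C)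

def base : G := (C.chart 1 (C.f 1)).1

lemma centered_base : C.Centered C.base (C.f 1) :=
  C.centered_chart_fst (by simpa using C.add_mul_le_R (Nat.zero_le _))

def Anchored (c : G) (h : H) : Prop :=
  ∃ w : List T, C.f 1 * wordProd T w = h ∧ C.lift C.base (C.f 1) w = c

variable {C}

lemma Anchored.centered {c : G} {h : H} (ha : C.Anchored c h) : C.Centered c h := by
  obtain ⟨w, rfl, rfl⟩ := ha
  exact C.centered_base.lift w

lemma Anchored.eq {c c' : G} {h : H} (ha : C.Anchored c h) (ha' : C.Anchored c' h) : c = c' := by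
  obtain ⟨w, hw, rfl⟩ := ha
  obtain ⟨w', hw', rfl⟩ := ha'
  exact C.centered_base.lift_congr (mul_left_cancel (hw.trans hw'.symm))

lemma Anchored.of_centered {a c : G} {h₁ h₂ : H} (ha : C.Anchored a h₁) (hc : C.Centered c h₂)
    (hd : n * (cayley (T : Set H)).dist h₁ h₂ + (cayley (S : Set G)).dist a c ≤ R) :
    C.Anchored c h₂ := by
  obtain ⟨hv, hvlen⟩ := geodesic_spec C.symm_T C.closure_T (h₁⁻¹ * h₂)
  set v := geodesic T (h₁⁻¹ * h₂)
  have he := ha.centered.lift v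
  rw [hv, mul_inv_cancel_left] at he
  have hlift : C.lift a h₁ v = c := by
    refine he.eq_of_dist_le hc ((C.dist_triangle_G _ a _).trans ?_)
    rw [SimpleGraph.dist_comm]
    have := ha.centered.dist_lift_le v
    have := Nat.mul_le_mul_left n hvlen
    rw [dist_one_inv_mul] at this
    omega
  obtain ⟨w, hw, rfl⟩ := ha
  exact ⟨w ++ v, by rw [wordProd_append, hv, ← mul_assoc, hw, mul_inv_cancel_left],
    by rw [C.lift_append, hw, hlift]⟩

variable (C)

lemma anchored_chart_fst_f (g : G) : C.Anchored (C.chart g (C.f g)).1 (C.f g) := by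
  have hstep : ∀ {g g' : G}, (cayley (S : Set G)).dist g g' ≤ 1 →
      C.Anchored (C.chart g (C.f g)).1 (C.f g) → C.Anchored (C.chart g' (C.f g')).1 (C.f g') := by
    intro g g' hgg' ha
    refine ha.of_centered (C.centered_chart_fst (by simpa using C.add_mul_le_R (Nat.zero_le _)))
      (C.mul_add_le_R ((C.isLip_f g g').trans (by simpa using Nat.mul_le_mul_left n hgg')) ?_)
    have h₁ := C.dist_chart_fst_le g (C.f g)
    have h₂ := C.dist_chart_fst_le g' (C.f g')
    have := C.dist_triangle_G (C.chart g (C.f g)).1 g (C.chart g' (C.f g')).1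
    have := C.dist_triangle_G g g' (C.chart g' (C.f g')).1
    simp only [SimpleGraph.dist_self, mul_zero, add_zero] at h₁ h₂
    rw [SimpleGraph.dist_comm] at h₁
    omega
  induction (C.closure_S ▸ Subgroup.mem_top g : g ∈ Subgroup.closure (S : Set G))
    using Subgroup.closure_induction_right with
  | one => exact ⟨[], by simp, rfl⟩
  | mul_right x _ s hs ih => exact hstep (dist_mul_of_mem_le x hs) ih
  | mul_inv_cancel x _ s hs ih =>
    refine hstep ?_ ih
    have := dist_one_inv_mul (S : Set G) s 1
    rw [mul_one] at this
    rw [dist_self_mul, this, SimpleGraph.dist_comm]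
    simpa using dist_mul_of_mem_le 1 hs

variable {C}

lemma Centered.anchored {c : G} {h : H} (hc : C.Centered c h) : C.Anchored c h := by
  refine (C.anchored_chart_fst_f c).of_centered hc (C.mul_add_le_R hc.1 ?_)
  have := C.dist_chart_fst_le c (C.f c)
  simp only [SimpleGraph.dist_self, mul_zero, add_zero] at this
  rw [SimpleGraph.dist_comm]
  omega

lemma Centered.unique {c c' : G} {h : H} (hc : C.Centered c h) (hc' : C.Centered c' h) :
    c = c' :=
  hc.anchored.eq hc'.anchored

variable (C)

noncomputable def center (h : H) : G := C.lift C.base (C.f 1) (geodesic T ((C.f 1)⁻¹ * h))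

lemma centered_center (h : H) : C.Centered (C.center h) h := by
  have := C.centered_base.lift (geodesic T ((C.f 1)⁻¹ * h))
  rwa [(geodesic_spec C.symm_T C.closure_T _).1, mul_inv_cancel_left] at this

noncomputable def sigma (h : H) : A := (C.chart (C.center h) h).2

lemma chart_eq_chart_center {g : G} {h : H}
    (hR : n + n * (cayley (T : Set H)).dist (C.f g) h ≤ R) :
    C.chart g h = C.chart (C.center h) h := by
  have hc := C.centered_chart_fst hR
  rw [← hc.unique (C.centered_center h)]
  exact (C.chart_eq_chart ((C.dist_chart_fst_le g h).trans hR) hc.1).symm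

lemma isLip_center : IsLip (T : Set H) (S : Set G) n C.center := by
  refine isLip_of_forall_mul_mem C.closure_T C.closure_S fun h t ht => ?_
  have hc := C.centered_center h
  rw [← (hc.chart_fst_mul ht).unique (C.centered_center (h * t))]
  exact hc.dist_chart_fst_mul_le ht

lemma isQIPair_f_center : IsQIPair (S : Set G) (T : Set H) n C.f C.center := by
  refine ⟨C.isLip_f, C.isLip_center, fun g => ?_, fun h => (C.centered_center h).1⟩
  have hR : n + n * (cayley (T : Set H)).dist (C.f g) (C.f g) ≤ R := by
    simpa using C.add_mul_le_R (Nat.zero_le _)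
  rw [← (C.centered_chart_fst hR).unique (C.centered_center _), SimpleGraph.dist_comm]
  simpa using C.dist_chart_fst_le g (C.f g)

lemma realizes_center (x : G) : Realizes τ C.f C.center C.sigma x := by
  obtain ⟨h₁, -, -⟩ := C.realizes x 1 (by simp)
  refine ⟨fun s => ?_, fun k => ?_, fun k => ?_⟩
  · simp only [mul_one, C.fl_one, inv_one, one_mul] at h₁
    rw [h₁ s, C.f_mul x s (C.dist_one_le_R s.2), inv_mul_cancel_left]
  all_goals
    have hR : n + n * (cayley (T : Set H)).dist (C.f x) (C.f x * k) ≤ R := by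
      rw [dist_self_mul]
      exact C.add_mul_le_R (k.2.trans (Nat.le_succ n))
    have hc := (C.centered_center (C.f x * k)).2
    have e := C.chart_f_mul x k
    rw [C.chart_eq_chart_center hR] at e
  · rw [← hc, e]
    simp
  · simp [sigma, e]

lemma sigma_mem (hX : ∀ σ ∈ X, ∀ a, (fun y => σ (a * y)) ∈ X) (W : Finset H)
    (hXW : ∀ σ : H → A, (∀ h, ∃ σ' ∈ X, ∀ x ∈ W, σ (h * x) = σ' x) → σ ∈ X)
    (hWR : ∀ x ∈ W, n + n * (n + (cayley (T : Set H)).dist 1 x) ≤ R) :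
    C.sigma ∈ X := by
  refine hXW _ fun h => ⟨_, hX _ (C.σl_mem (C.center h)) ((C.f (C.center h))⁻¹ * h),
    fun x hx => ?_⟩
  have hd : (cayley (T : Set H)).dist (C.f (C.center h)) (h * x) ≤
      n + (cayley (T : Set H)).dist 1 x := by
    rw [← dist_self_mul _ h]
    exact (C.dist_triangle_H _ h _).trans (Nat.add_le_add_right (C.centered_center h).1 _)
  have hR := (Nat.add_le_add_left (Nat.mul_le_mul_left n hd) n).trans (hWR x hx)
  rw [sigma, ← C.chart_eq_chart_center hR]
  simp [chart, mul_assoc]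

theorem isQIConfig (C : Gluing S T n R X τ) (hX : ∀ σ ∈ X, ∀ a, (fun y => σ (a * y)) ∈ X)
    (W : Finset H)
    (hXW : ∀ σ : H → A, (∀ h, ∃ σ' ∈ X, ∀ x ∈ W, σ (h * x) = σ' x) → σ ∈ X)
    (hWR : ∀ x ∈ W, n + n * (n + (cayley (T : Set H)).dist 1 x) ≤ R) :
    IsQIConfig S T n X τ :=
  ⟨C.f, C.center, C.sigma, C.isQIPair_f_center, C.sigma_mem hX W hXW hWR, C.realizes_center⟩

end Gluing

end LocalToGlobal

section Main

variable {G H A : Type*} [Group G] [Group H] {S : Finset G} {T : Finset H} {n : ℕ}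

theorem isQIConfig_of_forall_window (hSsym : ∀ s ∈ S, s⁻¹ ∈ S)
    (hSgen : Subgroup.closure (S : Set G) = ⊤) (hTsym : ∀ t ∈ T, t⁻¹ ∈ T)
    (hTgen : Subgroup.closure (T : Set H) = ⊤) {K R : ℕ} (hG : PresentedBy S R)
    (hH : PresentedBy T K) (hR : 2 * n * K + (n + 1) ^ 2 ≤ R) {X : Set (H → A)}
    (hX : ∀ σ ∈ X, ∀ a, (fun y => σ (a * y)) ∈ X) (W : Finset H)
    (hXW : ∀ σ : H → A, (∀ h, ∃ σ' ∈ X, ∀ x ∈ W, σ (h * x) = σ' x) → σ ∈ X)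
    (hWR : ∀ x ∈ W, n + n * (n + (cayley (T : Set H)).dist 1 x) ≤ R)
    {τ : G → QIAlphabet S T n A}
    (hτ : ∀ g, ∃ τ', IsQIConfig S T n X τ' ∧
      ∀ x, (cayley (S : Set G)).dist 1 x ≤ R → τ' x = τ (g * x)) :
    IsQIConfig S T n X τ := by
  have hloc : ∀ g, ∃ f F σ, IsQIPair (S : Set G) (T : Set H) n f F ∧ f 1 = 1 ∧ σ ∈ X ∧
      ∀ x, (cayley (S : Set G)).dist 1 x ≤ R → Realizes (fun y => τ (g * y)) f F σ x := by
    intro g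
    obtain ⟨τ', hτ', hagree⟩ := hτ g
    obtain ⟨f, F, σ, hfF, hf1, hσ, hre⟩ := hτ'.exists_normalized hX 1
    refine ⟨f, F, σ, hfF, hf1, hσ, fun x hx => ?_⟩
    have := hre x
    simp only [Realizes, one_mul] at this ⊢
    rwa [← hagree x hx]
  choose fl Fl σl hfF hf1 hσ hre using hloc
  obtain ⟨f, hf⟩ := exists_primitive hSsym hSgen hG (fun x s => ((τ x).1 s : H)) fl hf1
    fun g x hx => (hre g x hx).1
  exact Gluing.isQIConfig ⟨hSgen, hTsym, hTgen, K, hH, hR, f, fl, Fl, σl, hfF, hf1, hσ, hre, hf⟩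
    hX W hXW hWR

theorem isSFT_setOf_isQIConfig [Finite A] (hSsym : ∀ s ∈ S, s⁻¹ ∈ S)
    (hSgen : Subgroup.closure (S : Set G) = ⊤) (hTsym : ∀ t ∈ T, t⁻¹ ∈ T)
    (hTgen : Subgroup.closure (T : Set H) = ⊤) {K_G K_H : ℕ} (hG : PresentedBy S K_G)
    (hH : PresentedBy T K_H) {X : Set (H → A)} (hX : IsSFT X) (n : ℕ) :
    IsSFT {τ : G → QIAlphabet S T n A | IsQIConfig S T n X τ} := by
  obtain ⟨W, hXW⟩ := hX.exists_finset_mem_of_forall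
  set ρ := W.sup fun x => (cayley (T : Set H)).dist 1 x
  set R := K_G + (2 * n * K_H + (n + 1) ^ 2) + (n + n * (n + ρ))
  have hWR : ∀ x ∈ W, n + n * (n + (cayley (T : Set H)).dist 1 x) ≤ R := fun x hx => by
    have hρ : (cayley (T : Set H)).dist 1 x ≤ ρ := Finset.le_sup (f := fun x =>
      (cayley (T : Set H)).dist 1 x) hx
    have := Nat.mul_le_mul_left n (Nat.add_le_add_left hρ n)
    omega
  have hXmul := fun σ (hσ : σ ∈ X) a => hX.mul_left_mem hσ a
  have : Finite (ball (T : Set H) n 1) := (ball_finite hTsym hTgen n).to_subtype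
  have : Finite (ball (S : Set G) (n ^ 2 + n) 1) := (ball_finite hSsym hSgen _).to_subtype
  set B := (ball_finite hSsym hSgen R).toFinset
  convert isSFT_setOf_forall_window B (fun q : B → QIAlphabet S T n A =>
    ∃ τ', IsQIConfig S T n X τ' ∧ ∀ x : B, τ' x = q x) using 1
  ext τ
  refine ⟨fun hτ g => ?_, fun hτ => ?_⟩
  · obtain ⟨f, F, σ, hfF, -, hσ, hre⟩ := hτ.exists_normalized hXmul g
    exact ⟨_, ⟨f, F, σ, hfF, hσ, hre⟩, fun _ => rfl⟩
  · refine isQIConfig_of_forall_window hSsym hSgen hTsym hTgen (hG.mono (by omega)) hH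
      (by omega) hXmul W hXW hWR fun g => ?_
    obtain ⟨τ', hτ', hagree⟩ := hτ g
    exact ⟨τ', hτ', fun x hx => hagree ⟨x, (Set.Finite.mem_toFinset _).mpr hx⟩⟩

end Main

end QISubshift

open QISubshift

/-- for finitely presented `G`, `H`, a finite alphabet `A` and an SFT
`X_H ⊆ A^H`, the set of triples `(df, ℓ_{Ff}, f*(B_n σ))` over all `n`-QI pairs `(f,F)` and
`σ ∈ X_H`, viewed inside `𝒜^G` with
`𝒜 = B_H(n,1)^S × B_G(n²+n,1)^{B_H(n,1)} × A^{B_H(n,1)}`, is a subshift of finite type.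
Here `⟨B_nσ(h),k⟩ = σ(hk)` and `f*τ = τ ∘ f`, so the third component is
`g ↦ (k ↦ σ(f(g)·k))`. -/
theorem stmt19 {G H : Type*} [Group G] [Group H] (S : Finset G) (T : Finset H)
    (hSsym : ∀ s ∈ S, s⁻¹ ∈ S) (hSgen : Subgroup.closure (S : Set G) = ⊤)
    (hTsym : ∀ t ∈ T, t⁻¹ ∈ T) (hTgen : Subgroup.closure (T : Set H) = ⊤)
    (hGfp : ∃ K : ℕ, PresentedBy S K) (hHfp : ∃ K : ℕ, PresentedBy T K)
    {A : Type*} [Finite A] (X_H : Set (H → A)) (hXH : IsSFT X_H) (n : ℕ) :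
    IsSFT {τ : G → ((↥S → ↥(ball (T : Set H) n 1)) ×
        (↥(ball (T : Set H) n 1) → ↥(ball (S : Set G) (n ^ 2 + n) 1)) ×
        (↥(ball (T : Set H) n 1) → A)) |
      ∃ (f : G → H) (F : H → G) (σ : H → A),
        IsQIPair (S : Set G) (T : Set H) n f F ∧ σ ∈ X_H ∧
        (∀ (g : G) (s : ↥S), (((τ g).1 s : H)) = (f g)⁻¹ * f (g * ↑s)) ∧
        (∀ (g : G) (k : ↥(ball (T : Set H) n 1)),
          (((τ g).2.1 k : G)) = g⁻¹ * F (f g * ↑k)) ∧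
        (∀ (g : G) (k : ↥(ball (T : Set H) n 1)),
          (τ g).2.2 k = σ (f g * ↑k))} := by
  obtain ⟨K_G, hG⟩ := hGfp
  obtain ⟨K_H, hH⟩ := hHfp
  simpa only [IsQIConfig, Realizes, forall_and] using
    isSFT_setOf_isQIConfig hSsym hSgen hTsym hTgen hG hH hXH n
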